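/- arXiv:1402.4277 — 7 statements merged into one kernel-verified Lean document; each statement's English description precedes it below -/
import Mathlib

section
/- For every finite connected simple graph G = (V, E) and any two distinct vertices u, v ∈ V, the union of the connected component of u in G^(v) and the connected component of v in G^(u) equals V. -/
/-- The graph obtained from `G` by deleting all edges incident to `v`
(keeping all vertices). -/
def delV {V : Type*} (G : SimpleGraph V) (v : V) : SimpleGraph V where
  Adj a b := G.Adj a b ∧ a ≠ v ∧ b ≠ v
  symm := ⟨fun a b h => ⟨h.1.symm, h.2.2, h.2.1⟩⟩
  loopless := ⟨fun a h => G.loopless.irrefl a h.1⟩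

/-- `u` and `v` lie on a common cycle (circuit) of `G`. -/
def hasCommonCycle {V : Type*} (G : SimpleGraph V) (u v : V) : Prop :=
  ∃ (a : V) (c : G.Walk a a), c.IsCycle ∧ u ∈ c.support ∧ v ∈ c.support

/-!
Fix `x` and a path `p` from `x` to `u` in `G`. If `p` avoids `v`, it is a path in `G^(v)`.
Otherwise the initial segment of `p` up to `v` is a path from `x` to `v` avoiding `u`,
since a path meets its end vertex only once, so it lives in `G^(u)`.
-/

namespace SimpleGraph

variable {V : Type*} {G : SimpleGraph V}

theorem Walk.reachable_delV {a b w : V} (p : G.Walk a b) (hw : w ∉ p.support) :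
    (delV G w).Reachable a b := by
  refine ⟨p.transfer _ fun e he => ?_⟩
  induction e using Sym2.ind with
  | h c d =>
    exact ⟨p.adj_of_mem_edges he, ne_of_mem_of_not_mem (p.fst_mem_support_of_mem_edges he) hw,
      ne_of_mem_of_not_mem (p.snd_mem_support_of_mem_edges he) hw⟩

theorem Reachable.reachable_delV_or_reachable_delV {x u v : V} (h : G.Reachable x u)
    (huv : u ≠ v) : (delV G v).Reachable u x ∨ (delV G u).Reachable v x := by
  classical
  obtain ⟨p, hp⟩ := h.some.toPath
  by_cases hv : v ∈ p.support
  · exact .inr ((p.takeUntil v hv).reachable_delV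
      (Walk.endpoint_notMem_support_takeUntil hp hv huv)).symm
  · exact .inl (p.reachable_delV hv).symm

end SimpleGraph

theorem union_components_eq_univ_general {V : Type*} (G : SimpleGraph V)
    (hG : G.Connected) (u v : V) (huv : u ≠ v) :
    {x | (delV G v).Reachable u x} ∪ {x | (delV G u).Reachable v x} = (Set.univ : Set V) :=
  Set.eq_univ_of_forall fun x => (hG x u).reachable_delV_or_reachable_delV huv

theorem union_components_eq_univ {V : Type*} [Fintype V] (G : SimpleGraph V)
    (hG : G.Connected) (u v : V) (huv : u ≠ v) :
    {x | (delV G v).Reachable u x} ∪ {x | (delV G u).Reachable v x} = (Set.univ : Set V) :=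
  union_components_eq_univ_general G hG u v huv
end

section
/- Let P = (p_v)_{v ∈ V} be a compatible family of V-partitions. For any three distinct elements u, v, w ∈ V: p_w[u] ≠ p_w[v] if and only if p_w[u] is a proper subset of p_v[w]. -/
/-- A compatible family of `V`-partitions: for each `v ∈ V` a partition of `V`,
recorded via its block function `blk v u` = the block of the partition `p_v`
containing `u`, such that `p_v[u] ∪ p_u[v] = V` for all distinct `u, v`, and
`{v} ∈ p_v` for all `v`. -/
structure CompFam (V : Type*) where
  blk : V → V → Set V
  mem_self : ∀ v u, u ∈ blk v u
  eq_of_mem : ∀ v u w, w ∈ blk v u → blk v w = blk v u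
  self_blk : ∀ v, blk v v = {v}
  compat : ∀ u v : V, u ≠ v → blk v u ∪ blk u v = Set.univ

/-- The graph `B_P = (V, E_P)` associated to a compatible family `P`:
`{u,v} ∈ E_P` iff `p_w[u] = p_w[v]` for all `w ∈ V − {u,v}`. -/
def BP {V : Type*} (P : CompFam V) : SimpleGraph V where
  Adj u v := u ≠ v ∧ ∀ w, w ≠ u → w ≠ v → P.blk w u = P.blk w v
  symm := ⟨fun u v h => ⟨h.1.symm, fun w h1 h2 => (h.2 w h2 h1).symm⟩⟩
  loopless := ⟨fun u h => h.1 rfl⟩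

/-! Distinct blocks of `p_w` are disjoint, and by compatibility whatever lies outside `p_w[v]`
lies in `p_v[w]`; so `p_w[u] ⊆ p_v[w]` as soon as `p_w[u] ≠ p_w[v]`. The singleton blocks `{w}`
of `p_w` and `{v}` of `p_v` rule out equality in one direction and give the converse. -/

namespace CompFam

variable {V : Type*} (P : CompFam V)

theorem blk_eq_blk_iff {v x y : V} : P.blk v x = P.blk v y ↔ y ∈ P.blk v x :=
  ⟨fun h => h ▸ P.mem_self v y, fun h => (P.eq_of_mem v x y h).symm⟩

theorem eq_of_self_mem_blk {v u : V} (h : v ∈ P.blk v u) : u = v := by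
  have hu := P.mem_self v u
  rwa [← P.eq_of_mem v u v h, P.self_blk] at hu

theorem mem_blk_of_notMem_blk {v w x : V} (hvw : v ≠ w) (hx : x ∉ P.blk w v) :
    x ∈ P.blk v w :=
  ((P.compat v w hvw).symm ▸ Set.mem_univ x : x ∈ P.blk w v ∪ P.blk v w).resolve_left hx

end CompFam

theorem sep_iff_ssubset_general {V : Type*} (P : CompFam V) (u v w : V)
    (huw : u ≠ w) (hvw : v ≠ w) :
    P.blk w u ≠ P.blk w v ↔ P.blk w u ⊂ P.blk v w := by
  constructor
  · intro hne
    refine ⟨fun x hx => P.mem_blk_of_notMem_blk hvw fun hxv => hne ?_, fun hsup => huw ?_⟩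
    · exact (P.blk_eq_blk_iff.2 hx).trans (P.blk_eq_blk_iff.2 hxv).symm
    · exact P.eq_of_self_mem_blk (hsup (P.mem_self v w))
  · intro hsub heq
    exact hvw (P.eq_of_self_mem_blk (hsub.subset (P.blk_eq_blk_iff.1 heq))).symm

theorem sep_iff_ssubset {V : Type*} [Fintype V] (P : CompFam V) (u v w : V)
    (huv : u ≠ v) (huw : u ≠ w) (hvw : v ≠ w) :
    P.blk w u ≠ P.blk w v ↔ P.blk w u ⊂ P.blk v w :=
  sep_iff_ssubset_general P u v w huw hvw
end

section
/- Let P = (p_v)_{v ∈ V} be a compatible family of V-partitions. For any three distinct elements u, v, w ∈ V: p_w[u] ≠ p_w[v] if and only if p_w[u] ⊆ p_v[u], and this also holds if and only if p_w[u] is a proper subset of p_v[u]. -/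
/-! If `p_w[u] ≠ p_w[v]`, then neither `u` nor any `x ∈ p_w[u]` lies in `p_w[v]`, so by
compatibility of `w` and `v` they all lie in the single block `p_v[w]`; hence
`p_w[u] ⊆ p_v[w] = p_v[u]`, and the inclusion is strict because `w ∈ p_v[u]` while
`w ∉ p_w[u]` (as `{w} ∈ p_w`). Conversely, `p_w[u] = p_w[v]` would put `v` into
`p_v[u]`, forcing `u ∈ p_v[v] = {v}`. -/

namespace CompFam

variable {V : Type*} (P : CompFam V)

theorem blk_eq_blk_iff_s6 {a b c : V} : P.blk a b = P.blk a c ↔ c ∈ P.blk a b :=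
  ⟨fun h => h ▸ P.mem_self a c, fun h => (P.eq_of_mem a b c h).symm⟩

theorem mem_blk_comm {a b c : V} (h : c ∈ P.blk a b) : b ∈ P.blk a c :=
  P.blk_eq_blk_iff_s6.mp (P.blk_eq_blk_iff_s6.mpr h).symm

theorem mem_blk_self_iff {a b : V} : a ∈ P.blk a b ↔ b = a :=
  ⟨fun h => by simpa [P.self_blk] using P.mem_blk_comm h, fun h => h ▸ P.mem_self a a⟩

theorem mem_blk_of_notMem {a b x : V} (hab : a ≠ b) (hx : x ∉ P.blk b a) : x ∈ P.blk a b :=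
  ((P.compat a b hab).symm ▸ Set.mem_univ x : x ∈ P.blk b a ∪ P.blk a b).resolve_left hx

variable {u v w : V}

theorem mem_blk_of_blk_ne {x : V} (hvw : v ≠ w) (h : P.blk w u ≠ P.blk w v)
    (hx : x ∈ P.blk w u) : x ∈ P.blk v w :=
  P.mem_blk_of_notMem hvw fun hxv =>
    h ((P.blk_eq_blk_iff_s6.mpr hx).trans (P.blk_eq_blk_iff_s6.mpr (P.mem_blk_comm hxv)))

theorem blk_subset_of_blk_ne (hvw : v ≠ w) (h : P.blk w u ≠ P.blk w v) :
    P.blk w u ⊆ P.blk v u := by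
  have hu : P.blk v w = P.blk v u :=
    P.blk_eq_blk_iff_s6.mpr (P.mem_blk_of_blk_ne hvw h (P.mem_self w u))
  exact fun x hx => hu ▸ P.mem_blk_of_blk_ne hvw h hx

theorem blk_ssubset_of_blk_ne (huw : u ≠ w) (hvw : v ≠ w) (h : P.blk w u ≠ P.blk w v) :
    P.blk w u ⊂ P.blk v u := by
  have hw : w ∈ P.blk v u := P.mem_blk_comm (P.mem_blk_of_blk_ne hvw h (P.mem_self w u))
  exact (Set.ssubset_iff_of_subset (P.blk_subset_of_blk_ne hvw h)).mpr
    ⟨w, hw, fun hw' => huw (P.mem_blk_self_iff.mp hw')⟩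

theorem blk_ne_of_blk_subset (huv : u ≠ v) (h : P.blk w u ⊆ P.blk v u) :
    P.blk w u ≠ P.blk w v := fun heq =>
  huv (P.mem_blk_self_iff.mp (h (P.blk_eq_blk_iff_s6.mp heq)))

end CompFam

theorem sep_iff_subset_and_ssubset_general {V : Type*} (P : CompFam V) (u v w : V)
    (huv : u ≠ v) (huw : u ≠ w) (hvw : v ≠ w) :
    (P.blk w u ≠ P.blk w v ↔ P.blk w u ⊆ P.blk v u) ∧
    (P.blk w u ≠ P.blk w v ↔ P.blk w u ⊂ P.blk v u) := by
  have ssubset_of_ne := P.blk_ssubset_of_blk_ne huw hvw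
  have ne_of_subset : P.blk w u ⊆ P.blk v u → P.blk w u ≠ P.blk w v :=
    P.blk_ne_of_blk_subset huv
  exact ⟨⟨fun h => (ssubset_of_ne h).subset, ne_of_subset⟩,
    ⟨ssubset_of_ne, fun h => ne_of_subset h.subset⟩⟩

theorem sep_iff_subset_and_ssubset {V : Type*} [Fintype V] (P : CompFam V) (u v w : V)
    (huv : u ≠ v) (huw : u ≠ w) (hvw : v ≠ w) :
    (P.blk w u ≠ P.blk w v ↔ P.blk w u ⊆ P.blk v u) ∧
    (P.blk w u ≠ P.blk w v ↔ P.blk w u ⊂ P.blk v u) :=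
  sep_iff_subset_and_ssubset_general P u v w huv huw hvw
end

section
/- Let P = (p_v)_{v ∈ V} be a compatible family of V-partitions. For any four elements u, u', v, v' ∈ V with u ≠ v and u' ≠ v', one has p_{v'}[u'] ⊆ p_v[u] if and only if p_v[u'] = p_v[u] and either v = v' or v' separates v and u' (i.e., v' ∉ {v, u'} and p_{v'}[v] ≠ p_{v'}[u']). -/
/-! The forward direction only uses that blocks are blocks and that `p_v[u]` avoids `v`.
Conversely, if `v'` separates `v` and `u'`, then `p_{v'}[u']` misses `p_{v'}[v]`, so
compatibility at the pair `v, v'` puts it inside `p_v[v']`, which is `p_v[u'] = p_v[u]`. -/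

namespace CompFam

variable {V : Type*} (P : CompFam V)

theorem blk_eq_iff_mem {v u w : V} : P.blk v w = P.blk v u ↔ w ∈ P.blk v u :=
  ⟨fun h => h ▸ P.mem_self v w, P.eq_of_mem v u w⟩

theorem notMem_blk_of_ne {v u : V} (huv : u ≠ v) : v ∉ P.blk v u := by
  intro hv
  have hblk : P.blk v u = {v} := ((P.blk_eq_iff_mem).2 hv).symm.trans (P.self_blk v)
  exact huv (Set.mem_singleton_iff.1 (hblk ▸ P.mem_self v u))

theorem blk_subset_blk_of_blk_ne {v v' u' : V} (hvv' : v ≠ v')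
    (hne : P.blk v' v ≠ P.blk v' u') : P.blk v' u' ⊆ P.blk v v' := by
  intro x hx
  refine P.mem_blk_of_notMem_blk hvv' fun hxv => hne ?_
  exact ((P.blk_eq_iff_mem).2 hxv).symm.trans ((P.blk_eq_iff_mem).2 hx)

end CompFam

theorem subset_iff_eq_and_sep_general {V : Type*} (P : CompFam V) (u u' v v' : V)
    (huv : u ≠ v) (hu'v' : u' ≠ v') :
    P.blk v' u' ⊆ P.blk v u ↔
      (P.blk v u' = P.blk v u ∧
        (v = v' ∨ (v' ≠ v ∧ v' ≠ u' ∧ P.blk v' v ≠ P.blk v' u'))) := by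
  constructor
  · intro hsub
    refine ⟨(P.blk_eq_iff_mem).2 (hsub (P.mem_self v' u')), ?_⟩
    refine or_iff_not_imp_left.2 fun hvv' => ⟨Ne.symm hvv', hu'v'.symm, fun hblk => ?_⟩
    exact P.notMem_blk_of_ne huv (hsub (hblk ▸ P.mem_self v' v))
  · rintro ⟨heq, rfl | ⟨hv'v, -, hne⟩⟩
    · exact heq.subset
    · have hsub := P.blk_subset_blk_of_blk_ne (Ne.symm hv'v) hne
      have hu'_mem : u' ∈ P.blk v v' := hsub (P.mem_self v' u')
      rwa [← (P.blk_eq_iff_mem).2 hu'_mem, heq] at hsub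

theorem subset_iff_eq_and_sep {V : Type*} [Fintype V] (P : CompFam V) (u u' v v' : V)
    (huv : u ≠ v) (hu'v' : u' ≠ v') :
    P.blk v' u' ⊆ P.blk v u ↔
      (P.blk v u' = P.blk v u ∧
        (v = v' ∨ (v' ≠ v ∧ v' ≠ u' ∧ P.blk v' v ≠ P.blk v' u'))) :=
  subset_iff_eq_and_sep_general P u u' v v' huv hu'v'
end

section
/- Let P = (p_v)_{v ∈ V} be a compatible family of V-partitions and u, v distinct elements of V. Then p_v[u] is a minimal element of {p_w[u] : w ∈ V − {u}} with respect to inclusion if and only if p_v[u] is a minimal element of the smaller collection {p_w[u] : w ∈ p_u[v]}. -/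
namespace CompFam

variable {V : Type*} (P : CompFam V) {u v w : V}

theorem eq_of_mem_blk_self (h : u ∈ P.blk v v) : u = v := by
  simpa [P.self_blk] using h

theorem mem_blk_comm_s12 (h : v ∈ P.blk w u) : u ∈ P.blk w v :=
  P.eq_of_mem w u v h ▸ P.mem_self w u

theorem ne_of_mem_blk (huv : u ≠ v) (h : w ∈ P.blk u v) : w ≠ u := by
  rintro rfl
  exact huv (P.eq_of_mem_blk_self (P.mem_blk_comm_s12 h)).symm

theorem mem_blk_or_mem_blk (huw : u ≠ w) (v : V) : v ∈ P.blk w u ∨ w ∈ P.blk u v :=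
  (Set.eq_univ_iff_forall.mp (P.compat u w huw) v).imp id P.mem_blk_comm_s12

/-- By compatibility, either `w ∈ p_u[v]` or `v ∈ p_w[u] ⊆ p_v[u]`; the latter puts `u` in
`p_v[v] = {v}`. -/
theorem mem_blk_of_blk_subset (huv : u ≠ v) (hw : w ≠ u) (hsub : P.blk w u ⊆ P.blk v u) :
    w ∈ P.blk u v := by
  refine (P.mem_blk_or_mem_blk hw.symm v).resolve_left fun hv => huv ?_
  exact P.eq_of_mem_blk_self (P.mem_blk_comm_s12 (hsub hv))

end CompFam

theorem minimal_iff_minimal_restricted_general {V : Type*} (P : CompFam V) (u v : V)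
    (huv : u ≠ v) :
    (∀ w : V, w ≠ u → P.blk w u ⊆ P.blk v u → P.blk w u = P.blk v u) ↔
      (∀ w : V, w ∈ P.blk u v → P.blk w u ⊆ P.blk v u → P.blk w u = P.blk v u) :=
  ⟨fun h w hw => h w (P.ne_of_mem_blk huv hw),
    fun h w hw hsub => h w (P.mem_blk_of_blk_subset huv hw hsub) hsub⟩

theorem minimal_iff_minimal_restricted {V : Type*} [Fintype V] (P : CompFam V) (u v : V)
    (huv : u ≠ v) :
    (∀ w : V, w ≠ u → P.blk w u ⊆ P.blk v u → P.blk w u = P.blk v u) ↔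
      (∀ w : V, w ∈ P.blk u v → P.blk w u ⊆ P.blk v u → P.blk w u = P.blk v u) :=
  minimal_iff_minimal_restricted_general P u v huv
end

section
/- Let P = (p_v)_{v ∈ V} be a compatible family of V-partitions and u, v, w three distinct elements of V with {u, w} ∈ E_P and {w, v} ∈ E_P. Then {u, v} ∈ E_P if and only if p_w[u] = p_w[v]. -/
theorem edge_iff_blk_eq_general {V : Type*} (P : CompFam V) (u v w : V)
    (huv : u ≠ v) (huw : u ≠ w) (hvw : v ≠ w)
    (h1 : (BP P).Adj u w) (h2 : (BP P).Adj w v) :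
    (BP P).Adj u v ↔ P.blk w u = P.blk w v := by
  refine ⟨fun hadj => hadj.2 w huw.symm hvw.symm, fun hw => ⟨huv, fun x hxu hxv => ?_⟩⟩
  rcases eq_or_ne x w with rfl | hxw
  · exact hw
  · exact (h1.2 x hxu hxw).trans (h2.2 x hxw hxv)

theorem edge_iff_blk_eq {V : Type*} [Fintype V] (P : CompFam V) (u v w : V)
    (huv : u ≠ v) (huw : u ≠ w) (hvw : v ≠ w)
    (h1 : (BP P).Adj u w) (h2 : (BP P).Adj w v) :
    (BP P).Adj u v ↔ P.blk w u = P.blk w v :=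
  edge_iff_blk_eq_general P u v w huv huw hvw h1 h2
end

section
/- Let P = (p_v)_{v ∈ V} be a compatible family of V-partitions, and let u, v be distinct elements of V. Suppose (u_0 = u, u_1, ..., u_n = v) is a sequence in V such that p_{u_1}[u] ⊊ p_{u_2}[u] ⊊ ... ⊊ p_{u_n}[u] = p_v[u] is a maximal chain in {p_w[u] : w ∈ V − {u}, p_w[u] ⊆ p_v[u]} ending with p_v[u]. Then {u_{i-1}, u_i} ∈ E_P for all i = 1, ..., n, i.e., the sequence forms a path from u to v in the graph B_P = (V, E_P). -/
namespace CompFam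

variable {V : Type*} (P : CompFam V)

theorem mem_blk_iff {v x y : V} : y ∈ P.blk v x ↔ P.blk v y = P.blk v x :=
  ⟨P.eq_of_mem v x y, fun h => h ▸ P.mem_self v y⟩

theorem notMem_blk_self {x y : V} (hxy : x ≠ y) : x ∉ P.blk x y := fun hx => by
  have hy : y ∈ P.blk x x := (P.eq_of_mem x y x hx).symm ▸ P.mem_self x y
  exact hxy (P.self_blk x ▸ hy).symm

theorem mem_blk_of_notMem_blk_s14 {x w y : V} (hxw : x ≠ w) (hy : y ∉ P.blk x w) :
    y ∈ P.blk w x :=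
  ((P.compat w x hxw.symm).symm ▸ Set.mem_univ y : y ∈ P.blk x w ∪ P.blk w x).resolve_left hy

theorem mem_blk_or_mem_blk_s14 (u : V) {x y : V} (hxy : x ≠ y) :
    x ∈ P.blk y u ∨ y ∈ P.blk x u := by
  by_cases hu : u ∈ P.blk y x
  · exact .inl ((P.mem_blk_iff.mp hu).symm ▸ P.mem_self y x)
  · exact .inr ((P.mem_blk_iff.mp (P.mem_blk_of_notMem_blk_s14 hxy.symm hu)).symm ▸ P.mem_self x y)

theorem blk_subset_blk_of_notMem {u x y : V} (hxy : x ≠ y) (hy : y ∉ P.blk x u) :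
    P.blk x u ⊆ P.blk y u := by
  have hx : x ∈ P.blk y u := (P.mem_blk_or_mem_blk_s14 u hxy).resolve_right hy
  intro z hz
  by_cases hzy : z ∈ P.blk x y
  · exact absurd (P.mem_blk_iff.mpr ((P.mem_blk_iff.mp hzy).symm.trans (P.mem_blk_iff.mp hz))) hy
  · rw [← P.mem_blk_iff.mp hx]
    exact P.mem_blk_of_notMem_blk_s14 hxy hzy

theorem blk_eq_blk_of_mem_iff_notMem {u x w y : V} (hxw : x ≠ w)
    (h : w ∈ P.blk x u ↔ y ∉ P.blk x u) : P.blk w y = P.blk w x := by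
  refine P.eq_of_mem w x y (P.mem_blk_of_notMem_blk_s14 hxw fun hy => ?_)
  rw [P.mem_blk_iff, P.mem_blk_iff, P.eq_of_mem x w y hy] at h
  exact iff_not_self h

/-- For `a ≠ u` the condition `a ∈ p_w[u]` just says `p_w[u] ≠ p_a[u]`; for `a = u` it is void,
so that `p_b[u]` must then be minimal among the blocks `p_w[u]`, `w ≠ u`. -/
theorem adj_of_not_blk_between {u a b : V} (hbu : b ≠ u) (hab : a ≠ b)
    (hsub : P.blk a u ⊆ P.blk b u)
    (hbetween : ∀ w, w ≠ u → a ∈ P.blk w u → P.blk a u ⊆ P.blk w u → ¬P.blk w u ⊂ P.blk b u) :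
    (BP P).Adj a b := by
  have hbA : b ∉ P.blk a u := fun h => P.notMem_blk_self hbu (hsub h)
  have haB : a ∈ P.blk b u := (P.mem_blk_or_mem_blk_s14 u hab).resolve_right hbA
  refine ⟨hab, fun w hwa hwb => ?_⟩
  by_cases hwA : w ∈ P.blk a u
  · exact (P.blk_eq_blk_of_mem_iff_notMem hwa.symm (iff_of_true hwA hbA)).symm
  by_cases hwB : w ∈ P.blk b u
  · have hwu : w ≠ u := fun h => hwA (h ▸ P.mem_self a u)
    have haW : a ∈ P.blk w u := (P.mem_blk_or_mem_blk_s14 u hwa).resolve_left hwA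
    by_cases hbW : b ∈ P.blk w u
    · rw [P.eq_of_mem w u a haW, P.eq_of_mem w u b hbW]
    · refine absurd ⟨P.blk_subset_blk_of_notMem hwb hbW, fun h => ?_⟩
        (hbetween w hwu haW (P.blk_subset_blk_of_notMem hwa.symm hwA))
      exact P.notMem_blk_self hwu (h hwB)
  · exact P.blk_eq_blk_of_mem_iff_notMem hwb.symm (iff_of_false hwB (not_not.mpr haB))

theorem blk_subset_blk_of_chain {u : V} {n : ℕ} {c : ℕ → V} (h0 : c 0 = u)
    (hchain : ∀ i j, 1 ≤ i → i < j → j ≤ n → P.blk (c i) u ⊂ P.blk (c j) u)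
    {j k : ℕ} (hjk : j ≤ k) (hk : k ≤ n) : P.blk (c j) u ⊆ P.blk (c k) u := by
  rcases Nat.eq_zero_or_pos j with rfl | hj
  · rw [h0, P.self_blk u, Set.singleton_subset_iff]
    exact P.mem_self _ u
  rcases hjk.eq_or_lt with rfl | hlt
  · exact subset_rfl
  · exact (hchain j k hj hlt hk).subset

end CompFam

theorem maximal_chain_gives_path_general {V : Type*} (P : CompFam V) (u v : V)
    (n : ℕ) (c : ℕ → V) (h0 : c 0 = u)
    (hmem : ∀ i, 1 ≤ i → i ≤ n → c i ≠ u ∧ P.blk (c i) u ⊆ P.blk v u)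
    (hchain : ∀ i j, 1 ≤ i → i < j → j ≤ n → P.blk (c i) u ⊂ P.blk (c j) u)
    (hmax : ∀ w : V, w ≠ u → P.blk w u ⊆ P.blk v u →
      (∀ i, 1 ≤ i → i ≤ n → P.blk w u ⊆ P.blk (c i) u ∨ P.blk (c i) u ⊆ P.blk w u) →
      ∃ i, 1 ≤ i ∧ i ≤ n ∧ P.blk w u = P.blk (c i) u) :
    ∀ i, 1 ≤ i → i ≤ n → (BP P).Adj (c (i - 1)) (c i) := by
  intro i hi hin
  have hmono {j k : ℕ} : j ≤ k → k ≤ n → P.blk (c j) u ⊆ P.blk (c k) u :=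
    P.blk_subset_blk_of_chain h0 hchain
  have hbu : c i ≠ u := (hmem i hi hin).1
  refine P.adj_of_not_blk_between hbu ?_ (hmono (Nat.sub_le i 1) hin) ?_
  · rcases hi.eq_or_lt with rfl | hi
    · rw [Nat.sub_self, h0]
      exact hbu.symm
    · exact fun h => (hchain (i - 1) i (by omega) (by omega) hin).ne (congrArg (P.blk · u) h)
  · intro w hwu haW hAW hWB
    obtain ⟨j, hj, hjn, hWj⟩ := hmax w hwu (hWB.subset.trans (hmem i hi hin).2) fun j _ hjn =>
      (le_or_gt i j).imp (fun hij => hWB.subset.trans (hmono hij hjn))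
        (fun hji => (hmono (by omega) (by omega)).trans hAW)
    rcases le_or_gt i j with hij | hji
    · exact not_subset_of_ssubset hWB (hWj ▸ hmono hij hjn)
    · have hau : c (i - 1) ≠ u := (hmem (i - 1) (by omega) (by omega)).1
      have hWA : P.blk w u ⊆ P.blk (c (i - 1)) u := hWj ▸ hmono (by omega) (by omega)
      exact P.notMem_blk_self hau (hWA haW)

theorem maximal_chain_gives_path {V : Type*} [Fintype V] (P : CompFam V) (u v : V)
    (huv : u ≠ v) (n : ℕ) (hn : 1 ≤ n) (c : ℕ → V) (h0 : c 0 = u) (hend : c n = v)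
    (hmem : ∀ i, 1 ≤ i → i ≤ n → c i ≠ u ∧ P.blk (c i) u ⊆ P.blk v u)
    (hchain : ∀ i j, 1 ≤ i → i < j → j ≤ n → P.blk (c i) u ⊂ P.blk (c j) u)
    (hmax : ∀ w : V, w ≠ u → P.blk w u ⊆ P.blk v u →
      (∀ i, 1 ≤ i → i ≤ n → P.blk w u ⊆ P.blk (c i) u ∨ P.blk (c i) u ⊆ P.blk w u) →
      ∃ i, 1 ≤ i ∧ i ≤ n ∧ P.blk w u = P.blk (c i) u) :
    ∀ i, 1 ≤ i → i ≤ n → (BP P).Adj (c (i - 1)) (c i) :=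
  maximal_chain_gives_path_general P u v n c h0 hmem hchain hmax
end
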